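/- arXiv:1807.08358 — 2 statements merged into one kernel-verified Lean document; each statement's English description precedes it below -/
import Mathlib

section
/- For every natural number n ≥ 2, the group K_n^2 (obtained from the common relations together with g1² = 1, g2² = g3·t^{1+2^n}, g5^{g4} = g5) has order 2^{n+6}, nilpotency class n + 3 (hence coclass 3), and its automorphism group Aut(K_n^2) is not a 2-group. -/
/-- Generators `g₁, g₂, g₃, g₄, g₅, t` for the coclass-`3` groups `Kₙⁱ`. -/
inductive KGen : Type
  | g1 | g2 | g3 | g4 | g5 | t

namespace KGen

def a1 : FreeGroup KGen := FreeGroup.of KGen.g1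
def a2 : FreeGroup KGen := FreeGroup.of KGen.g2
def a3 : FreeGroup KGen := FreeGroup.of KGen.g3
def a4 : FreeGroup KGen := FreeGroup.of KGen.g4
def a5 : FreeGroup KGen := FreeGroup.of KGen.g5
def tt : FreeGroup KGen := FreeGroup.of KGen.t

/-- Conjugation `x ^ y = y⁻¹ * x * y`. -/
def cnj (x y : FreeGroup KGen) : FreeGroup KGen := y⁻¹ * x * y

/-- The common relators: `g₂^g₁ = g₂g₃`, `g₃^g₁ = g₃t`, `g₃^g₂ = g₃`, `g₃² = t⁻¹`,
`g₄^g₁ = g₄`, `g₄^g₂ = g₄`, `g₄^g₃ = g₄`, `g₄² = 1`, `g₅^g₁ = g₅`, `g₅^g₂ = g₅`,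
`g₅^g₃ = g₅`, `g₅² = 1`, `t^g₁ = t⁻¹`, `t^g₂ = t`, `t^g₃ = t`, `t^g₄ = t`, `t^g₅ = t`,
`t^(2^(n+1)) = 1`. -/
def commonRels (n : ℕ) : Set (FreeGroup KGen) :=
  {cnj a2 a1 * (a2 * a3)⁻¹,
   cnj a3 a1 * (a3 * tt)⁻¹,
   cnj a3 a2 * a3⁻¹,
   a3 ^ 2 * tt,
   cnj a4 a1 * a4⁻¹,
   cnj a4 a2 * a4⁻¹,
   cnj a4 a3 * a4⁻¹,
   a4 ^ 2,
   cnj a5 a1 * a5⁻¹,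
   cnj a5 a2 * a5⁻¹,
   cnj a5 a3 * a5⁻¹,
   a5 ^ 2,
   cnj tt a1 * tt,
   cnj tt a2 * tt⁻¹,
   cnj tt a3 * tt⁻¹,
   cnj tt a4 * tt⁻¹,
   cnj tt a5 * tt⁻¹,
   tt ^ (2 ^ (n + 1))}

end KGen

open KGen

/-- `Kₙ¹`: common relators together with `g₁² = 1`, `g₂² = g₃t`, `g₅^g₄ = g₅`. -/
abbrev K1 (n : ℕ) : Type :=
  PresentedGroup (commonRels n ∪
    {a1 ^ 2, a2 ^ 2 * (a3 * tt)⁻¹, cnj a5 a4 * a5⁻¹})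

/-- `Kₙ²`: common relators together with `g₁² = 1`, `g₂² = g₃t^(1+2^n)`, `g₅^g₄ = g₅`. -/
abbrev K2 (n : ℕ) : Type :=
  PresentedGroup (commonRels n ∪
    {a1 ^ 2, a2 ^ 2 * (a3 * tt ^ (1 + 2 ^ n))⁻¹, cnj a5 a4 * a5⁻¹})

/-- `Kₙ³`: common relators together with `g₁² = t^(2^n)`, `g₂² = g₃t`, `g₅^g₄ = g₅`. -/
abbrev K3 (n : ℕ) : Type :=
  PresentedGroup (commonRels n ∪
    {a1 ^ 2 * (tt ^ (2 ^ n))⁻¹, a2 ^ 2 * (a3 * tt)⁻¹, cnj a5 a4 * a5⁻¹})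

/-- `Kₙ⁴`: common relators together with `g₁² = 1`, `g₂² = g₃t`, `g₅^g₄ = g₅t^(2^n)`. -/
abbrev K4 (n : ℕ) : Type :=
  PresentedGroup (commonRels n ∪
    {a1 ^ 2, a2 ^ 2 * (a3 * tt)⁻¹, cnj a5 a4 * (a5 * tt ^ (2 ^ n))⁻¹})

/-- `Kₙ⁵`: common relators together with `g₁² = 1`, `g₂² = g₃t^(1+2^n)`,
`g₅^g₄ = g₅t^(2^n)`. -/
abbrev K5 (n : ℕ) : Type :=
  PresentedGroup (commonRels n ∪
    {a1 ^ 2, a2 ^ 2 * (a3 * tt ^ (1 + 2 ^ n))⁻¹, cnj a5 a4 * (a5 * tt ^ (2 ^ n))⁻¹})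

/-- `Kₙ⁶`: common relators together with `g₁² = t^(2^n)`, `g₂² = g₃t`,
`g₅^g₄ = g₅t^(2^n)`. -/
abbrev K6 (n : ℕ) : Type :=
  PresentedGroup (commonRels n ∪
    {a1 ^ 2 * (tt ^ (2 ^ n))⁻¹, a2 ^ 2 * (a3 * tt)⁻¹, cnj a5 a4 * (a5 * tt ^ (2 ^ n))⁻¹})

/-!
`K₂ⁿ` is isomorphic to `SD × V`, where `V` is a Klein four group and `SD = ℤ/2^(n+3) ⋊ ℤ/2` is
the semidihedral group: the generator `y` of `ℤ/2` acts on `ℤ/2^(n+3) = ⟨x⟩` by multiplication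
with `u = 2^(n+2) - 1`. The isomorphism sends `g₁ ↦ y`, `g₂ ↦ x`, `g₃ ↦ x^(u-1)`, `t ↦ x^4`
and `g₄, g₅` to generators of `V`; conversely the relations of `K₂ⁿ` force `g₃ = g₂^(u-1)`,
`t = g₂^4`, `g₂^(2^(n+3)) = 1` and `g₂^g₁ = g₂^u`, which gives the inverse map.
Hence `|K₂ⁿ| = 2^(n+4) · 4`.

In `R ⋊ H` with `H` abelian acting on `(R, +)` through units `χ h ≡ 1 mod I`, the `(k+1)`-st
term of the lower central series lies in `I^(k+1)`, while `(1 - χ h)^k` lies in the `k`-th term.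
For `SD`, `1 - u = 2 · (1 - 2^(n+1))` is twice a unit, so the class is exactly `n + 3`; the
abelian factor `V` does not change it. Finally, the automorphism of `V` permuting its three
involutions cyclically has order `3`.
-/

open Multiplicative

lemma commute_of_inv_mul_mul_eq {G : Type*} [Group G] {a b : G} (h : a⁻¹ * b * a = b) :
    Commute a b := by
  rw [mul_assoc, inv_mul_eq_iff_eq_mul] at h
  exact h.symm

lemma zpow_add_mul_of_zpow_eq_one {G : Type*} [Group G] {x : G} {N : ℤ} (h : x ^ N = 1)
    (a k : ℤ) : x ^ (a + N * k) = x ^ a := by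
  rw [zpow_add, zpow_mul, h, one_zpow, mul_one]

lemma not_isPGroup_of_orderOf_eq_prime {G : Type*} [Group G] {p q : ℕ} (hq : q.Prime)
    (hqp : ¬ q ∣ p) {g : G} (hg : orderOf g = q) : ¬ IsPGroup p G := by
  intro hG
  obtain ⟨k, hk⟩ := hG g
  exact hqp (hq.dvd_of_dvd_pow (hg ▸ orderOf_dvd_of_pow_eq_one hk))

lemma MonoidHom.prod_hom_ext {M N P : Type*} [Monoid M] [Monoid N] [Monoid P]
    {f g : M × N →* P} (hl : f.comp (inl M N) = g.comp (inl M N))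
    (hr : f.comp (inr M N) = g.comp (inr M N)) : f = g := by
  ext ⟨m, k⟩
  have hmk : ((m, k) : M × N) = inl M N m * inr M N k := by simp
  rw [hmk, map_mul, map_mul]
  exact congrArg₂ (· * ·) (DFunLike.congr_fun hl m) (DFunLike.congr_fun hr k)

lemma MulEquiv.lowerCentralSeries_eq_bot_iff {G K : Type*} [Group G] [Group K] (e : G ≃* K)
    (k : ℕ) :
    (⊤ : Subgroup G).lowerCentralSeries k = ⊥ ↔ (⊤ : Subgroup K).lowerCentralSeries k = ⊥ := by
  rw [← Subgroup.map_eq_bot_iff_of_injective (f := e.toMonoidHom) _ e.injective,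
    Subgroup.map_lowerCentralSeries, Subgroup.map_top_of_surjective _ e.surjective]

lemma Subgroup.top_lowerCentralSeries_prod_eq_bot_iff {G A : Type*} [Group G] [CommGroup A]
    {k : ℕ} (hk : k ≠ 0) :
    (⊤ : Subgroup (G × A)).lowerCentralSeries k = ⊥ ↔
      (⊤ : Subgroup G).lowerCentralSeries k = ⊥ := by
  have hA : (⊤ : Subgroup A).lowerCentralSeries k = ⊥ :=
    Subgroup.lowerCentralSeries_eq_bot_iff_nilpotencyClass_le.2
      (CommGroup.nilpotencyClass_le_one.trans (Nat.one_le_iff_ne_zero.2 hk))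
  rw [Subgroup.top_lowerCentralSeries_prod, hA, Subgroup.prod_eq_bot_iff, and_iff_left rfl]

namespace ZMod

variable {G : Type*} [Group G]

def liftMul (m : ℕ) (g : G) (hg : g ^ m = 1) : Multiplicative (ZMod m) →* G :=
  AddMonoidHom.toMultiplicativeLeft
    (ZMod.lift m ⟨zmultiplesHom (Additive G) (Additive.ofMul g), by simpa [zmultiplesHom]⟩)

variable {m : ℕ} {g : G}

@[simp]
lemma liftMul_intCast (hg : g ^ m = 1) (k : ℤ) :
    liftMul m g hg (ofAdd (k : ZMod m)) = g ^ k := by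
  simp [liftMul, zmultiplesHom]

@[simp]
lemma liftMul_ofAdd_one (hg : g ^ m = 1) : liftMul m g hg (ofAdd 1) = g := by
  simpa using liftMul_intCast hg 1

lemma liftMul_apply [NeZero m] (hg : g ^ m = 1) (x : Multiplicative (ZMod m)) :
    liftMul m g hg x = g ^ (toAdd x).val := by
  have := liftMul_intCast hg ((toAdd x).val : ℤ)
  rwa [Int.cast_natCast, ZMod.natCast_zmod_val, zpow_natCast] at this

lemma monoidHom_ext {f f' : Multiplicative (ZMod m) →* G} (h : f (ofAdd 1) = f' (ofAdd 1)) :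
    f = f' := by
  refine MonoidHom.ext fun x => ?_
  obtain ⟨k, hk⟩ := ZMod.intCast_surjective (toAdd x)
  rw [← ofAdd_toAdd x, ← hk, ← zsmul_one, ofAdd_zsmul, map_zpow, map_zpow, h]

end ZMod

namespace UnitsSemidirectProduct

variable {R : Type*} [CommRing R] {H : Type*} [CommGroup H]

def action (χ : H →* Rˣ) : H →* MulAut (Multiplicative R) :=
  (MulAutMultiplicative R).symm.toMonoidHom.comp ((DistribMulAction.toAddAut Rˣ R).comp χ)

@[simp]
lemma toAdd_action (χ : H →* Rˣ) (h : H) (x : Multiplicative R) :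
    toAdd (action χ h x) = χ h * toAdd x := rfl

end UnitsSemidirectProduct

abbrev UnitsSemidirectProduct {R : Type*} [CommRing R] {H : Type*} [CommGroup H]
    (χ : H →* Rˣ) : Type _ :=
  Multiplicative R ⋊[UnitsSemidirectProduct.action χ] H

namespace UnitsSemidirectProduct

open SemidirectProduct

open scoped commutatorElement

variable {R : Type*} [CommRing R] {H : Type*} [CommGroup H] {χ : H →* Rˣ}

lemma commutator_right (a b : UnitsSemidirectProduct χ) : ⁅a, b⁆.right = 1 := by
  simp [commutatorElement_def, mul_comm a.right]

lemma toAdd_commutator_left (a b : UnitsSemidirectProduct χ) :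
    toAdd ⁅a, b⁆.left =
      (1 - χ b.right) * toAdd a.left - (1 - χ a.right) * toAdd b.left := by
  simp only [commutatorElement_def, mul_left, inv_left, mul_right, inv_right, toAdd_mul,
    toAdd_inv, toAdd_action]
  simp only [map_mul, map_inv, Units.val_mul]
  have hα := Units.mul_inv (χ a.right)
  have hβ := Units.mul_inv (χ b.right)
  linear_combination (-(χ b.right : R) * toAdd a.left
    - toAdd b.left * χ b.right * ↑(χ b.right)⁻¹) * hα - toAdd b.left * hβ

variable (χ) in
def idealSubgroup (I : Ideal R) : Subgroup (UnitsSemidirectProduct χ) where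
  carrier := {g | g.right = 1 ∧ toAdd g.left ∈ I}
  mul_mem' := by
    rintro a b ⟨ha, ha'⟩ ⟨hb, hb'⟩
    refine ⟨by simp [ha, hb], ?_⟩
    simpa [ha] using I.add_mem ha' hb'
  one_mem' := ⟨rfl, I.zero_mem⟩
  inv_mem' := by
    rintro a ⟨ha, ha'⟩
    exact ⟨by simp [ha], by simpa [ha] using I.neg_mem ha'⟩

lemma idealSubgroup_bot : idealSubgroup χ ⊥ = ⊥ := by
  refine eq_bot_iff.2 fun g ⟨hr, hl⟩ => ?_
  rw [Ideal.mem_bot] at hl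
  exact SemidirectProduct.ext (by simpa using congrArg ofAdd hl) hr

lemma lowerCentralSeries_le_idealSubgroup {I : Ideal R} (hI : ∀ h, 1 - (χ h : R) ∈ I)
    (k : ℕ) :
    (⊤ : Subgroup (UnitsSemidirectProduct χ)).lowerCentralSeries (k + 1) ≤
      idealSubgroup χ (I ^ (k + 1)) := by
  induction k with
  | zero =>
    refine Subgroup.commutator_le.2 fun a _ b _ => ⟨commutator_right a b, ?_⟩
    rw [toAdd_commutator_left, zero_add, pow_one]
    exact I.sub_mem (I.mul_mem_right _ (hI _)) (I.mul_mem_right _ (hI _))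
  | succ k ih =>
    refine Subgroup.commutator_le.2 fun a ha b _ => ⟨commutator_right a b, ?_⟩
    obtain ⟨har, hal⟩ := ih ha
    rw [toAdd_commutator_left, har, map_one, Units.val_one, sub_self, zero_mul, sub_zero,
      pow_succ' I]
    exact Ideal.mul_mem_mul (hI _) hal

lemma inl_mem_lowerCentralSeries (h : H) (k : ℕ) :
    (inl (ofAdd ((1 - χ h : R) ^ k)) : UnitsSemidirectProduct χ) ∈
      (⊤ : Subgroup (UnitsSemidirectProduct χ)).lowerCentralSeries k := by
  induction k with
  | zero => exact Subgroup.mem_top _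
  | succ k ih =>
    have hc : ⁅(inl (ofAdd ((1 - χ h : R) ^ k)) : UnitsSemidirectProduct χ),
        (inr h : UnitsSemidirectProduct χ)⁆ = inl (ofAdd ((1 - χ h : R) ^ (k + 1))) := by
      refine SemidirectProduct.ext ?_ (commutator_right _ _)
      apply toAdd.injective
      rw [toAdd_commutator_left]
      simp [pow_succ']
    rw [← hc]
    exact Subgroup.commutator_mem_commutator ih (Subgroup.mem_top _)

theorem lowerCentralSeries_eq_bot {x : R} (hx : ∀ h, 1 - (χ h : R) ∈ Ideal.span {x}) {k : ℕ}
    (hk : x ^ (k + 1) = 0) :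
    (⊤ : Subgroup (UnitsSemidirectProduct χ)).lowerCentralSeries (k + 1) = ⊥ := by
  refine eq_bot_iff.2 ((lowerCentralSeries_le_idealSubgroup hx k).trans ?_)
  rw [Ideal.span_singleton_pow, hk, Ideal.span_singleton_eq_bot.2 rfl, idealSubgroup_bot]

theorem lowerCentralSeries_ne_bot (h : H) {k : ℕ} (hk : (1 - χ h : R) ^ k ≠ 0) :
    (⊤ : Subgroup (UnitsSemidirectProduct χ)).lowerCentralSeries k ≠ ⊥ := by
  intro hbot
  have hmem := inl_mem_lowerCentralSeries (χ := χ) h k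
  rw [hbot, Subgroup.mem_bot, map_eq_one_iff _ inl_injective] at hmem
  exact hk (congrArg toAdd hmem)

end UnitsSemidirectProduct

namespace Semidihedral

variable (n : ℕ)

lemma two_pow_eq_zero : (2 : ZMod (2 ^ (n + 3))) ^ (n + 3) = 0 := by
  exact_mod_cast ZMod.natCast_self (2 ^ (n + 3))

def unit : (ZMod (2 ^ (n + 3)))ˣ where
  val := 2 ^ (n + 2) - 1
  inv := 2 ^ (n + 2) - 1
  val_inv := by linear_combination (2 ^ (n + 1) - 1 : ZMod (2 ^ (n + 3))) * two_pow_eq_zero n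
  inv_val := by linear_combination (2 ^ (n + 1) - 1 : ZMod (2 ^ (n + 3))) * two_pow_eq_zero n

@[simp]
lemma val_unit : (unit n : ZMod (2 ^ (n + 3))) = 2 ^ (n + 2) - 1 := rfl

@[simp]
lemma unit_inv : (unit n)⁻¹ = unit n := rfl

lemma unit_sq : unit n ^ 2 = 1 :=
  Units.ext (by rw [Units.val_pow_eq_pow_val, sq]; exact (unit n).val_inv)

def character : Multiplicative (ZMod 2) →* (ZMod (2 ^ (n + 3)))ˣ :=
  ZMod.liftMul 2 (unit n) (unit_sq n)

@[simp]
lemma character_ofAdd_one : character n (ofAdd 1) = unit n := ZMod.liftMul_ofAdd_one _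

end Semidihedral

abbrev Semidihedral (n : ℕ) : Type := UnitsSemidirectProduct (Semidihedral.character n)

namespace Semidihedral

variable (n : ℕ)

lemma card : Nat.card (Semidihedral n) = 2 ^ (n + 4) := by
  rw [SemidirectProduct.card, Nat.card_congr toAdd, Nat.card_congr toAdd, Nat.card_zmod,
    Nat.card_zmod, pow_succ 2 (n + 3)]

lemma one_sub_unit : (1 - unit n : ZMod (2 ^ (n + 3))) = 2 * (1 - 2 ^ (n + 1)) := by
  rw [val_unit]
  ring

lemma one_sub_character_mem_span (h : Multiplicative (ZMod 2)) :
    1 - (character n h : ZMod (2 ^ (n + 3))) ∈ Ideal.span {1 - (unit n : ZMod (2 ^ (n + 3)))} := by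
  rw [Ideal.mem_span_singleton, character, ZMod.liftMul_apply, Units.val_pow_eq_pow_val]
  exact one_sub_dvd_one_sub_pow _ _

lemma one_sub_unit_pow_eq_zero : (1 - unit n : ZMod (2 ^ (n + 3))) ^ (n + 3) = 0 := by
  rw [one_sub_unit, mul_pow, two_pow_eq_zero, zero_mul]

lemma one_sub_unit_pow_ne_zero : (1 - unit n : ZMod (2 ^ (n + 3))) ^ (n + 2) ≠ 0 := by
  have hcast : (1 - unit n : ZMod (2 ^ (n + 3))) = ((2 * (1 - 2 ^ (n + 1)) : ℤ) : ZMod _) := by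
    rw [one_sub_unit]
    push_cast
    rfl
  have hodd : Odd ((1 - 2 ^ (n + 1) : ℤ) ^ (n + 2)) := Odd.pow ⟨-2 ^ n, by ring⟩
  rw [hcast, ← Int.cast_pow, Ne, ZMod.intCast_zmod_eq_zero_iff_dvd, mul_pow, Nat.cast_pow,
    Nat.cast_ofNat, pow_succ 2 (n + 2), mul_dvd_mul_iff_left (by positivity), ← even_iff_two_dvd,
    Int.not_even_iff_odd]
  exact hodd

theorem lowerCentralSeries_eq_bot :
    (⊤ : Subgroup (Semidihedral n)).lowerCentralSeries (n + 3) = ⊥ :=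
  UnitsSemidirectProduct.lowerCentralSeries_eq_bot (one_sub_character_mem_span n)
    (one_sub_unit_pow_eq_zero n)

theorem lowerCentralSeries_ne_bot :
    (⊤ : Subgroup (Semidihedral n)).lowerCentralSeries (n + 2) ≠ ⊥ :=
  UnitsSemidirectProduct.lowerCentralSeries_ne_bot (ofAdd 1) (by
    rw [character_ofAdd_one]
    exact one_sub_unit_pow_ne_zero n)

end Semidihedral

abbrev KleinFour : Type := Multiplicative (ZMod 2) × Multiplicative (ZMod 2)

namespace KleinFour

lemma card : Nat.card KleinFour = 4 := by
  rw [Nat.card_prod, Nat.card_congr toAdd, Nat.card_zmod]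

def rotation : KleinFour ≃* KleinFour where
  toFun x := (x.2, x.1 * x.2)
  invFun x := (x.1 * x.2, x.1)
  left_inv := by decide
  right_inv := by decide
  map_mul' := by decide

lemma orderOf_prodCongr_rotation (G : Type*) [Group G] :
    orderOf (MulEquiv.prodCongr (MulEquiv.refl G) rotation) = 3 := by
  refine orderOf_eq_prime (MulEquiv.ext fun x => Prod.ext rfl ?_) fun h => ?_
  · have h3 : ∀ y : KleinFour, rotation (rotation (rotation y)) = y := by decide
    exact h3 x.2
  · have h1 : rotation (ofAdd 1, 1) = (ofAdd 1, 1) :=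
      congrArg (fun f : MulAut (G × KleinFour) => (f (1, (ofAdd 1, 1))).2) h
    exact absurd h1 (by decide)

lemma not_isPGroup_mulAut_prod (G : Type*) [Group G] :
    ¬ IsPGroup 2 (MulAut (G × KleinFour)) :=
  not_isPGroup_of_orderOf_eq_prime Nat.prime_three (by norm_num) (orderOf_prodCongr_rotation G)

end KleinFour

namespace K2

variable {n : ℕ}

def x1 : K2 n := PresentedGroup.of KGen.g1
def x2 : K2 n := PresentedGroup.of KGen.g2
def x3 : K2 n := PresentedGroup.of KGen.g3
def x4 : K2 n := PresentedGroup.of KGen.g4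
def x5 : K2 n := PresentedGroup.of KGen.g5
def xt : K2 n := PresentedGroup.of KGen.t

lemma x1_conj_x2 : x1⁻¹ * x2 * x1 = (x2 * x3 : K2 n) :=
  PresentedGroup.mk_eq_mk_of_mul_inv_mem (x := cnj a2 a1) (y := a2 * a3) (by simp [commonRels])

lemma x3_sq_mul_xt : x3 ^ 2 * xt = (1 : K2 n) :=
  PresentedGroup.one_of_mem (x := a3 ^ 2 * tt) (by simp [commonRels])

lemma xt_pow_two_pow : xt ^ 2 ^ (n + 1) = (1 : K2 n) :=
  PresentedGroup.one_of_mem (x := tt ^ 2 ^ (n + 1)) (by simp [commonRels])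

lemma x1_sq : x1 ^ 2 = (1 : K2 n) :=
  PresentedGroup.one_of_mem (x := a1 ^ 2) (by simp)

lemma x2_sq : x2 ^ 2 = (x3 * xt ^ (1 + 2 ^ n) : K2 n) :=
  PresentedGroup.mk_eq_mk_of_mul_inv_mem (x := a2 ^ 2) (y := a3 * tt ^ (1 + 2 ^ n)) (by simp)

lemma x4_sq : x4 ^ 2 = (1 : K2 n) :=
  PresentedGroup.one_of_mem (x := a4 ^ 2) (by simp [commonRels])

lemma x5_sq : x5 ^ 2 = (1 : K2 n) :=
  PresentedGroup.one_of_mem (x := a5 ^ 2) (by simp [commonRels])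

lemma commute_x1_x4 : Commute (x1 : K2 n) x4 := commute_of_inv_mul_mul_eq <|
  PresentedGroup.mk_eq_mk_of_mul_inv_mem (x := cnj a4 a1) (y := a4) (by simp [commonRels])

lemma commute_x2_x4 : Commute (x2 : K2 n) x4 := commute_of_inv_mul_mul_eq <|
  PresentedGroup.mk_eq_mk_of_mul_inv_mem (x := cnj a4 a2) (y := a4) (by simp [commonRels])

lemma commute_x1_x5 : Commute (x1 : K2 n) x5 := commute_of_inv_mul_mul_eq <|
  PresentedGroup.mk_eq_mk_of_mul_inv_mem (x := cnj a5 a1) (y := a5) (by simp [commonRels])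

lemma commute_x2_x5 : Commute (x2 : K2 n) x5 := commute_of_inv_mul_mul_eq <|
  PresentedGroup.mk_eq_mk_of_mul_inv_mem (x := cnj a5 a2) (y := a5) (by simp [commonRels])

lemma commute_x4_x5 : Commute (x4 : K2 n) x5 := commute_of_inv_mul_mul_eq <|
  PresentedGroup.mk_eq_mk_of_mul_inv_mem (x := cnj a5 a4) (y := a5) (by simp)

lemma x1_inv : (x1 : K2 n)⁻¹ = x1 :=
  inv_eq_of_mul_eq_one_left (by rw [← sq, x1_sq])

lemma xt_eq_x3_zpow : (xt : K2 n) = x3 ^ (-2 : ℤ) := by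
  rw [zpow_neg, zpow_ofNat]
  exact eq_inv_of_mul_eq_one_right x3_sq_mul_xt

lemma x3_zpow_two_pow : (x3 : K2 n) ^ (2 ^ (n + 2) : ℤ) = 1 := by
  rw [show (2 ^ (n + 2) : ℤ) = -2 * -(2 ^ (n + 1) : ℕ) by push_cast; ring, zpow_mul,
    ← xt_eq_x3_zpow, zpow_neg, zpow_natCast, xt_pow_two_pow, inv_one]

lemma x2_zpow_two : (x2 : K2 n) ^ (2 : ℤ) = x3 ^ (-1 - 2 ^ (n + 1) : ℤ) := by
  rw [zpow_ofNat, x2_sq, ← zpow_natCast xt, xt_eq_x3_zpow, ← zpow_mul, ← zpow_one_add]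
  congr 1
  push_cast
  ring

lemma x3_eq_x2_zpow : (x3 : K2 n) = x2 ^ (2 ^ (n + 2) - 2 : ℤ) := by
  rw [show (2 ^ (n + 2) - 2 : ℤ) = 2 * (2 ^ (n + 1) - 1) by ring, zpow_mul, x2_zpow_two,
    ← zpow_mul,
    show (-1 - 2 ^ (n + 1)) * (2 ^ (n + 1) - 1) = 1 + 2 ^ (n + 2) * (-2 ^ n : ℤ) by ring,
    zpow_add_mul_of_zpow_eq_one x3_zpow_two_pow, zpow_one]

lemma x2_zpow_two_pow : (x2 : K2 n) ^ (2 ^ (n + 3) : ℤ) = 1 := by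
  rw [show (2 ^ (n + 3) : ℤ) = 2 * 2 ^ (n + 2) by ring, zpow_mul, x2_zpow_two, ← zpow_mul,
    mul_comm, zpow_mul, x3_zpow_two_pow, one_zpow]

lemma x2_pow_two_pow : (x2 : K2 n) ^ 2 ^ (n + 3) = 1 := by
  rw [← zpow_natCast]
  exact_mod_cast x2_zpow_two_pow

lemma xt_eq_x2_zpow : (xt : K2 n) = x2 ^ (4 : ℤ) := by
  rw [xt_eq_x3_zpow, x3_eq_x2_zpow, ← zpow_mul,
    show (2 ^ (n + 2) - 2) * -2 = 4 + 2 ^ (n + 3) * (-1 : ℤ) by ring,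
    zpow_add_mul_of_zpow_eq_one x2_zpow_two_pow]

lemma x1_conj_x2_eq_zpow : x1⁻¹ * x2 * x1 = (x2 ^ (2 ^ (n + 2) - 1 : ℤ) : K2 n) := by
  rw [x1_conj_x2, x3_eq_x2_zpow, ← zpow_one_add]
  congr 1
  ring

open SemidirectProduct

variable (n)

abbrev Model : Type := Semidihedral n × KleinFour

def modelGen : KGen → Model n
  | .g1 => (inr (ofAdd 1), 1)
  | .g2 => (inl (ofAdd 1), 1)
  | .g3 => (inl (ofAdd (2 ^ (n + 2) - 2)), 1)
  | .g4 => (1, (ofAdd 1, 1))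
  | .g5 => (1, (1, ofAdd 1))
  | .t => (inl (ofAdd 4), 1)

lemma modelGen_rels : ∀ r ∈ commonRels n ∪
    {a1 ^ 2, a2 ^ 2 * (a3 * tt ^ (1 + 2 ^ n))⁻¹, cnj a5 a4 * a5⁻¹},
    FreeGroup.lift (modelGen n) r = 1 := by
  have h0 := Semidihedral.two_pow_eq_zero n
  have hinl : ∀ (x : Multiplicative (ZMod (2 ^ (n + 3)))) (k : ℕ),
      (inl x : Semidihedral n) ^ k = inl (x ^ k) := fun x k => (map_pow _ _ _).symm
  simp only [commonRels, Set.union_insert, Set.union_singleton, Set.mem_insert_iff,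
    Set.mem_singleton_iff, forall_eq_or_imp, forall_eq]
  simp only [cnj, a1, a2, a3, a4, a5, tt, map_mul, map_inv, map_pow, FreeGroup.lift_apply_of,
    modelGen, Prod.pow_mk, one_pow]
  simp only [hinl, Prod.ext_iff, SemidirectProduct.ext_iff, Prod.fst_mul, Prod.snd_mul,
    Prod.fst_inv, Prod.snd_inv, Prod.fst_one, Prod.snd_one, mul_left, mul_right, inv_left,
    inv_right, pow_two, left_inl, right_inl, left_inr, right_inr, one_left, one_right]
  simp only [← toAdd_eq_zero, toAdd_mul, toAdd_inv, UnitsSemidirectProduct.toAdd_action,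
    toAdd_ofAdd, toAdd_one, toAdd_pow]
  simp only [map_mul, map_inv, map_one, Semidihedral.character_ofAdd_one, Semidihedral.unit_inv,
    Units.val_mul, Units.val_one, Semidihedral.val_unit, nsmul_eq_mul, Nat.cast_add, Nat.cast_pow,
    Nat.cast_one, Nat.cast_ofNat, inv_one, mul_one, one_mul]
  and_intros
  all_goals first | decide | ring1 | skip
  -- what is left are identities in `ZMod (2 ^ (n + 3))` that need `2 ^ (n + 3) = 0`
  · linear_combination -h0
  · linear_combination -(2 ^ (n + 2) - 1) * (2 ^ (n + 1) - 1 : ZMod (2 ^ (n + 3))) * h0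
  · linear_combination -(2 ^ (n + 2) - 1) * (2 ^ (n + 1) : ZMod (2 ^ (n + 3))) * h0
  · linear_combination h0
  · linear_combination 2 * (2 ^ (n + 2) - 1 : ZMod (2 ^ (n + 3))) * h0
  · linear_combination h0

def toModel : K2 n →* Model n := PresentedGroup.toGroup (modelGen_rels n)

@[simp]
lemma toModel_x1 : toModel n x1 = (inr (ofAdd 1), 1) := PresentedGroup.toGroup.of _

@[simp]
lemma toModel_x2 : toModel n x2 = (inl (ofAdd 1), 1) := PresentedGroup.toGroup.of _

@[simp]
lemma toModel_x4 : toModel n x4 = (1, (ofAdd 1, 1)) := PresentedGroup.toGroup.of _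

@[simp]
lemma toModel_x5 : toModel n x5 = (1, (1, ofAdd 1)) := PresentedGroup.toGroup.of _

def ofSemidihedral : Semidihedral n →* K2 n :=
  lift (ZMod.liftMul _ x2 x2_pow_two_pow) (ZMod.liftMul 2 x1 x1_sq) fun h => by
    refine ZMod.monoidHom_ext ?_
    rcases (by decide : ∀ h : Multiplicative (ZMod 2), h = 1 ∨ h = ofAdd 1) h with rfl | rfl
    · simp
    · have hu : UnitsSemidirectProduct.action (Semidihedral.character n) (ofAdd 1) (ofAdd 1) =
          ofAdd ((2 ^ (n + 2) - 1 : ℤ) : ZMod (2 ^ (n + 3))) := by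
        apply toAdd.injective
        simp
      simp only [MonoidHom.comp_apply, MulEquiv.coe_toMonoidHom, MulAut.conj_apply,
        ZMod.liftMul_ofAdd_one, hu, ZMod.liftMul_intCast]
      rw [← x1_conj_x2_eq_zpow, x1_inv]

lemma ofSemidihedral_apply (s : Semidihedral n) :
    ofSemidihedral n s = x2 ^ (toAdd s.left).val * x1 ^ (toAdd s.right).val := by
  conv_lhs => rw [← inl_left_mul_inr_right s]
  simp only [ofSemidihedral, map_mul, lift_inl, lift_inr, ZMod.liftMul_apply]

def ofKleinFour : KleinFour →* K2 n :=
  (ZMod.liftMul 2 x4 x4_sq).noncommCoprod (ZMod.liftMul 2 x5 x5_sq) fun a b => by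
    simp only [ZMod.liftMul_apply]
    exact commute_x4_x5.pow_pow _ _

lemma ofKleinFour_apply (w : KleinFour) :
    ofKleinFour n w = x4 ^ (toAdd w.1).val * x5 ^ (toAdd w.2).val := by
  simp [ofKleinFour, ZMod.liftMul_apply]

def ofModel : Model n →* K2 n :=
  (ofSemidihedral n).noncommCoprod (ofKleinFour n) fun s w => by
    rw [ofSemidihedral_apply, ofKleinFour_apply]
    exact .mul_left (.mul_right (commute_x2_x4.pow_pow _ _) (commute_x2_x5.pow_pow _ _))
      (.mul_right (commute_x1_x4.pow_pow _ _) (commute_x1_x5.pow_pow _ _))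

lemma ofModel_inl_intCast (k : ℤ) :
    ofModel n (inl (ofAdd (k : ZMod (2 ^ (n + 3)))), 1) = x2 ^ k := by
  simp [ofModel, ofSemidihedral]

@[simp]
lemma ofModel_inl_one : ofModel n (inl (ofAdd 1), 1) = x2 := by
  simp [ofModel, ofSemidihedral]

@[simp]
lemma ofModel_inr_one : ofModel n (inr (ofAdd 1), 1) = x1 := by
  simp [ofModel, ofSemidihedral]

@[simp]
lemma ofModel_x4 : ofModel n (1, (ofAdd 1, 1)) = x4 := by
  simp [ofModel, ofKleinFour]

@[simp]
lemma ofModel_x5 : ofModel n (1, (1, ofAdd 1)) = x5 := by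
  simp [ofModel, ofKleinFour]

lemma ofModel_comp_toModel : (ofModel n).comp (toModel n) = MonoidHom.id (K2 n) := by
  refine PresentedGroup.ext fun g => ?_
  cases g
  all_goals simp only [MonoidHom.comp_apply, MonoidHom.id_apply, toModel,
    PresentedGroup.toGroup.of, modelGen]
  · exact ofModel_inr_one n
  · exact ofModel_inl_one n
  · rw [show (2 ^ (n + 2) - 2 : ZMod (2 ^ (n + 3))) = ((2 ^ (n + 2) - 2 : ℤ) : ZMod _) by
      push_cast; rfl, ofModel_inl_intCast, ← x3_eq_x2_zpow]
    rfl
  · exact ofModel_x4 n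
  · exact ofModel_x5 n
  · rw [show (4 : ZMod (2 ^ (n + 3))) = ((4 : ℤ) : ZMod _) by push_cast; rfl,
      ofModel_inl_intCast, ← xt_eq_x2_zpow]
    rfl

lemma toModel_comp_ofModel : (toModel n).comp (ofModel n) = MonoidHom.id (Model n) :=
  MonoidHom.prod_hom_ext
    (SemidirectProduct.hom_ext (ZMod.monoidHom_ext (by simp)) (ZMod.monoidHom_ext (by simp)))
    (MonoidHom.prod_hom_ext (ZMod.monoidHom_ext (by simp)) (ZMod.monoidHom_ext (by simp)))

def mulEquivModel : K2 n ≃* Model n :=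
  (toModel n).toMulEquiv (ofModel n) (ofModel_comp_toModel n) (toModel_comp_ofModel n)

end K2

theorem K2_card_class_autNotPGroup_general (n : ℕ) :
    Nat.card (K2 n) = 2 ^ (n + 6) ∧
      (⊤ : Subgroup (K2 n)).lowerCentralSeries (n + 3) = ⊥ ∧
      (⊤ : Subgroup (K2 n)).lowerCentralSeries (n + 2) ≠ ⊥ ∧
      ¬ IsPGroup 2 (MulAut (K2 n)) := by
  let e := K2.mulEquivModel n
  refine ⟨?_, ?_, ?_, fun h => KleinFour.not_isPGroup_mulAut_prod _ (h.of_equiv (MulAut.congr e))⟩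
  · rw [Nat.card_congr e.toEquiv, Nat.card_prod, Semidihedral.card, KleinFour.card]
    ring
  · rw [e.lowerCentralSeries_eq_bot_iff,
      Subgroup.top_lowerCentralSeries_prod_eq_bot_iff (by omega)]
    exact Semidihedral.lowerCentralSeries_eq_bot n
  · rw [Ne, e.lowerCentralSeries_eq_bot_iff,
      Subgroup.top_lowerCentralSeries_prod_eq_bot_iff (by omega)]
    exact Semidihedral.lowerCentralSeries_ne_bot n

/-- For every `n ≥ 2`, the group `Kₙ^2` has order `2^(n+6)`, nilpotency class `n + 3`
(hence coclass `3`), and its automorphism group is not a `2`-group. -/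
theorem K2_card_class_autNotPGroup (n : ℕ) (hn : 2 ≤ n) :
    Nat.card (K2 n) = 2 ^ (n + 6) ∧
      (⊤ : Subgroup (K2 n)).lowerCentralSeries (n + 3) = ⊥ ∧
      (⊤ : Subgroup (K2 n)).lowerCentralSeries (n + 2) ≠ ⊥ ∧
      ¬ IsPGroup 2 (MulAut (K2 n)) :=
  K2_card_class_autNotPGroup_general n
end

section
/- For every natural number n ≥ 2, the group K_n^4 (obtained from the common relations together with g1² = 1, g2² = g3·t, g5^{g4} = g5·t^{2^n}) has order 2^{n+6}, nilpotency class n + 3 (hence coclass 3), and its automorphism group Aut(K_n^4) is not a 2-group. -/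
open KGen

/-!
`K4 n` is the central product of the dihedral group `⟨g₁, g₂⟩` of order `2 ^ (n + 4)` (the
relations force `g₃ = g₂⁻²` and `t = g₂⁴`) with the dihedral group `⟨g₄, g₅⟩` of order `8`, their
centres `⟨g₂ ^ 2 ^ (n + 2)⟩` and `⟨⁅g₄, g₅⁆⟩` being identified. We realise it concretely on the
normal forms `g₁ ^ a * g₂ ^ b * g₄ ^ c * g₅ ^ d`. The relations give a map onto this model, and it
is injective because right multiplication by each generator changes normal forms exactly as the
model predicts. In the model every square lies in `⟨g₂ ^ 2⟩` and `⁅g₂ ^ x, g₁⁆ = g₂ ^ (2 * x)`, so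
the lower central series is `γ (k + 1) = ⟨g₂ ^ 2 ^ (k + 1)⟩`, which vanishes first at
`k + 1 = n + 3`; and `g₁ ↦ g₁ g₂ ^ (-2 ^ (n + 1)) g₅`, `g₂ ↦ g₂`, `g₄ ↦ g₅`,
`g₅ ↦ g₂ ^ 2 ^ (n + 1) g₄ g₅` is an automorphism of order `3`.
-/

open scoped commutatorElement

def Bool.sgn {R : Type*} [Neg R] (a : Bool) (x : R) : R := bif a then -x else x

namespace Bool

variable {R : Type*}

@[simp] lemma sgn_false [Neg R] (x : R) : sgn false x = x := rfl

@[simp] lemma sgn_true [Neg R] (x : R) : sgn true x = -x := rfl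

@[simp] lemma sgn_zero [NegZeroClass R] (a : Bool) : sgn a (0 : R) = 0 := by
  cases a <;> simp

@[simp] lemma sgn_sgn_self [InvolutiveNeg R] (a : Bool) (x : R) : sgn a (sgn a x) = x := by
  cases a <;> simp

lemma sgn_xor [InvolutiveNeg R] (a a' : Bool) (x : R) : sgn (a ^^ a') x = sgn a' (sgn a x) := by
  cases a <;> cases a' <;> simp

lemma sgn_add [SubtractionCommMonoid R] (a : Bool) (x y : R) :
    sgn a (x + y) = sgn a x + sgn a y := by
  cases a <;> simp [add_comm]

lemma sgn_neg [InvolutiveNeg R] (a : Bool) (x : R) : sgn a (-x) = -sgn a x := by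
  cases a <;> simp

end Bool

theorem Commute.of_inv_mul_mul_eq_self {G : Type*} [Group G] {a b : G} (h : b⁻¹ * a * b = a) :
    Commute a b := by
  rwa [mul_assoc, inv_mul_eq_iff_eq_mul] at h

theorem pow_toNat_mul_self {M : Type*} [Monoid M] {g : M} (hg : g ^ 2 = 1) (a : Bool) :
    g ^ a.toNat * g = g ^ (!a).toNat := by
  cases a <;> simp [← sq, hg]

theorem pow_zmod_val_add {M : Type*} [Monoid M] {m : ℕ} [NeZero m] {g : M} (hg : g ^ m = 1)
    (x y : ZMod m) : g ^ (x + y).val = g ^ x.val * g ^ y.val := by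
  rw [ZMod.val_add, ← pow_eq_pow_mod _ hg, pow_add]

theorem pow_zmod_val_neg {G : Type*} [Group G] {m : ℕ} [NeZero m] {g : G} (hg : g ^ m = 1)
    (x : ZMod m) : g ^ (-x).val = (g ^ x.val)⁻¹ := by
  rw [eq_inv_iff_mul_eq_one, ← pow_zmod_val_add hg, neg_add_cancel, ZMod.val_zero, pow_zero]

theorem pow_zmod_val_natCast {M : Type*} [Monoid M] {m : ℕ} {g : M} (hg : g ^ m = 1) (k : ℕ) :
    g ^ (k : ZMod m).val = g ^ k := by
  rw [ZMod.val_natCast, ← pow_eq_pow_mod _ hg]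

theorem commutator_le_of_forall_sq_mem {G : Type*} [Group G] {H : Subgroup G}
    (hH : ∀ g : G, g ^ 2 ∈ H) : commutator G ≤ H := by
  refine Subgroup.commutator_le.mpr fun g _ h _ => ?_
  have hgh : ⁅g, h⁆ = g ^ 2 * (g⁻¹ * h) ^ 2 * (h ^ 2)⁻¹ := by
    rw [commutatorElement_def, sq, sq, sq]; group
  rw [hgh]
  exact H.mul_mem (H.mul_mem (hH g) (hH _)) (H.inv_mem (hH h))

theorem IsPGroup.eq_one_of_pow_eq_one {p q : ℕ} {G : Type*} [Group G] (hG : IsPGroup p G)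
    (hpq : p.Coprime q) {g : G} (hg : g ^ q = 1) : g = 1 :=
  orderOf_eq_one_iff.mp <|
    Nat.Coprime.eq_one_of_dvd (hG.orderOf_coprime hpq g) (orderOf_dvd_of_pow_eq_one hg)

namespace K4

variable {n : ℕ}

abbrev relators (n : ℕ) : Set (FreeGroup KGen) :=
  commonRels n ∪ {a1 ^ 2, a2 ^ 2 * (a3 * tt)⁻¹, cnj a5 a4 * (a5 * tt ^ (2 ^ n))⁻¹}

instance : Fact (1 < 2 ^ (n + 3)) := ⟨Nat.one_lt_two_pow (by omega)⟩

lemma two_pow_add_three_eq_zero : (2 : ZMod (2 ^ (n + 3))) ^ (n + 3) = 0 := by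
  exact_mod_cast ZMod.natCast_self (2 ^ (n + 3))

lemma two_pow_add_two_ne_zero : (2 : ZMod (2 ^ (n + 3))) ^ (n + 2) ≠ 0 := by
  rw [show (2 : ZMod (2 ^ (n + 3))) ^ (n + 2) = ((2 ^ (n + 2) : ℕ) : ZMod _) by push_cast; rfl,
    Ne, ZMod.natCast_eq_zero_iff, Nat.pow_dvd_pow_iff_le_right']
  omega

def zTerm (e : Bool) : ZMod (2 ^ (n + 3)) := bif e then 2 ^ (n + 2) else 0

@[simp] lemma zTerm_false : zTerm (n := n) false = 0 := rfl

lemma zTerm_add (e e' : Bool) : zTerm (n := n) e + zTerm e' = zTerm (e ^^ e') := by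
  cases e <;> cases e' <;> simp [zTerm]
  linear_combination two_pow_add_three_eq_zero

@[simp] lemma zTerm_add_self (e : Bool) : zTerm (n := n) e + zTerm e = 0 := by
  rw [zTerm_add, Bool.xor_self, zTerm_false]

lemma neg_zTerm (e : Bool) : -zTerm (n := n) e = zTerm e := by
  rw [neg_eq_iff_add_eq_zero, zTerm_add_self]

lemma sgn_zTerm (a e : Bool) : a.sgn (zTerm (n := n) e) = zTerm e := by
  cases a <;> simp [neg_zTerm]

/-- `⟨a, b, c, d⟩` stands for `g₁ ^ a * g₂ ^ b * g₄ ^ c * g₅ ^ d`. In a product, moving `g₅` past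
`g₄` creates the central factor `g₂ ^ 2 ^ (n + 2)`, recorded by `zTerm`. -/
@[ext] structure Model (n : ℕ) where
  a : Bool
  b : ZMod (2 ^ (n + 3))
  c : Bool
  d : Bool

namespace Model

instance : Mul (Model n) :=
  ⟨fun x y => ⟨x.a ^^ y.a, y.a.sgn x.b + y.b + zTerm (x.d && y.c), x.c ^^ y.c, x.d ^^ y.d⟩⟩

instance : One (Model n) := ⟨⟨false, 0, false, false⟩⟩

instance : Inv (Model n) := ⟨fun x => ⟨x.a, -x.a.sgn x.b + zTerm (x.d && x.c), x.c, x.d⟩⟩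

@[simp] lemma mk_mul_mk (a b c d a' b' c' d') : (⟨a, b, c, d⟩ * ⟨a', b', c', d'⟩ : Model n) =
    ⟨a ^^ a', a'.sgn b + b' + zTerm (d && c'), c ^^ c', d ^^ d'⟩ := rfl

@[simp] lemma inv_mk (a b c d) :
    (⟨a, b, c, d⟩ : Model n)⁻¹ = ⟨a, -a.sgn b + zTerm (d && c), c, d⟩ := rfl

lemma one_def : (1 : Model n) = ⟨false, 0, false, false⟩ := rfl

instance : Group (Model n) := Group.ofLeftAxioms
  (fun ⟨a, b, c, d⟩ ⟨a', b', c', d'⟩ ⟨a'', b'', c'', d''⟩ => by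
    have hz : zTerm (n := n) (d && c') + zTerm ((d ^^ d') && c'') =
        zTerm (d' && c'') + zTerm (d && (c' ^^ c'')) := by
      simp only [zTerm_add]; congr 1; revert d d' c' c''; decide
    simp only [mk_mul_mk, Bool.sgn_add, Bool.sgn_xor, sgn_zTerm, Bool.xor_assoc, Model.mk.injEq,
      and_true, true_and]
    linear_combination hz)
  (fun ⟨a, b, c, d⟩ => by simp [one_def])
  (fun ⟨a, b, c, d⟩ => by simp [one_def, Bool.sgn_add, Bool.sgn_neg, sgn_zTerm])

lemma card : Nat.card (Model n) = 2 ^ (n + 6) := by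
  let e : Model n ≃ Bool × ZMod (2 ^ (n + 3)) × Bool × Bool :=
    ⟨fun x => (x.a, x.b, x.c, x.d), fun p => ⟨p.1, p.2.1, p.2.2.1, p.2.2.2⟩, fun _ => rfl,
      fun _ => rfl⟩
  rw [Nat.card_congr e, Nat.card_prod, Nat.card_prod, Nat.card_prod, Nat.card_zmod,
    Nat.card_eq_fintype_card (α := Bool), Fintype.card_bool]
  ring

def rot (x : ZMod (2 ^ (n + 3))) : Model n := ⟨false, x, false, false⟩

@[simp] lemma rot_zero : rot (0 : ZMod (2 ^ (n + 3))) = 1 := rfl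

@[simp] lemma rot_mul_rot (x y : ZMod (2 ^ (n + 3))) : rot x * rot y = rot (x + y) := by
  simp [rot]

@[simp] lemma rot_inv (x : ZMod (2 ^ (n + 3))) : (rot x)⁻¹ = rot (-x) := by
  simp [rot]

lemma rot_pow (x : ZMod (2 ^ (n + 3))) (k : ℕ) :
    rot x ^ k = rot ((k : ZMod (2 ^ (n + 3))) * x) := by
  induction k with
  | zero => simp
  | succ k ih => rw [pow_succ, ih, rot_mul_rot]; push_cast; ring_nf

def gen : KGen → Model n
  | .g1 => ⟨true, 0, false, false⟩
  | .g2 => rot 1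
  | .g3 => rot (-2)
  | .g4 => ⟨false, 0, true, false⟩
  | .g5 => ⟨false, 0, false, true⟩
  | .t => rot 4

lemma gen_rels : ∀ r ∈ relators n, FreeGroup.lift (gen (n := n)) r = 1 := by
  intro r hr
  simp only [relators, commonRels, Set.mem_union, Set.mem_insert_iff, Set.mem_singleton_iff] at hr
  rcases hr with (rfl|rfl|rfl|rfl|rfl|rfl|rfl|rfl|rfl|rfl|rfl|rfl|rfl|rfl|rfl|rfl|rfl|rfl) |
      (rfl|rfl|rfl) <;>
    simp [cnj, a1, a2, a3, a4, a5, tt, gen, rot_pow, pow_two] <;> simp [rot, one_def, zTerm] <;>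
    grind [two_pow_add_three_eq_zero]

end Model

def g₁ : K4 n := PresentedGroup.of KGen.g1
def g₂ : K4 n := PresentedGroup.of KGen.g2
def g₃ : K4 n := PresentedGroup.of KGen.g3
def g₄ : K4 n := PresentedGroup.of KGen.g4
def g₅ : K4 n := PresentedGroup.of KGen.g5
def t : K4 n := PresentedGroup.of KGen.t

def ofWord : FreeGroup KGen →* K4 n := PresentedGroup.mk _

@[simp] lemma ofWord_a1 : (ofWord a1 : K4 n) = g₁ := rfl
@[simp] lemma ofWord_a2 : (ofWord a2 : K4 n) = g₂ := rfl
@[simp] lemma ofWord_a3 : (ofWord a3 : K4 n) = g₃ := rfl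
@[simp] lemma ofWord_a4 : (ofWord a4 : K4 n) = g₄ := rfl
@[simp] lemma ofWord_a5 : (ofWord a5 : K4 n) = g₅ := rfl
@[simp] lemma ofWord_tt : (ofWord tt : K4 n) = t := rfl

@[simp] lemma ofWord_cnj (x y : FreeGroup KGen) :
    (ofWord (cnj x y) : K4 n) = (ofWord y)⁻¹ * ofWord x * ofWord y := by
  simp [cnj]

lemma ofWord_eq_one {r : FreeGroup KGen} (h : r ∈ relators n) : (ofWord r : K4 n) = 1 :=
  PresentedGroup.one_of_mem h

lemma ofWord_eq_ofWord {x y : FreeGroup KGen} (h : x * y⁻¹ ∈ relators n) :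
    (ofWord x : K4 n) = ofWord y :=
  PresentedGroup.mk_eq_mk_of_mul_inv_mem h

lemma g₁_sq : (g₁ : K4 n) ^ 2 = 1 := by
  have h := ofWord_eq_one (n := n) (r := a1 ^ 2) (by simp)
  simpa using h

lemma g₂_sq : (g₂ : K4 n) ^ 2 = g₃ * t := by
  have h := ofWord_eq_ofWord (n := n) (x := a2 ^ 2) (y := a3 * tt) (by simp)
  simpa using h

lemma g₃_sq_mul_t : (g₃ : K4 n) ^ 2 * t = 1 := by
  have h := ofWord_eq_one (n := n) (r := a3 ^ 2 * tt) (by simp [commonRels])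
  simpa using h

lemma t_pow : (t : K4 n) ^ 2 ^ (n + 1) = 1 := by
  have h := ofWord_eq_one (n := n) (r := tt ^ 2 ^ (n + 1)) (by simp [commonRels])
  simpa using h

lemma g₁_inv_mul_g₂_mul_g₁ : (g₁ : K4 n)⁻¹ * g₂ * g₁ = g₂ * g₃ := by
  have h := ofWord_eq_ofWord (n := n) (x := cnj a2 a1) (y := a2 * a3) (by simp [commonRels])
  simpa using h

lemma g₄_sq : (g₄ : K4 n) ^ 2 = 1 := by
  have h := ofWord_eq_one (n := n) (r := a4 ^ 2) (by simp [commonRels])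
  simpa using h

lemma g₅_sq : (g₅ : K4 n) ^ 2 = 1 := by
  have h := ofWord_eq_one (n := n) (r := a5 ^ 2) (by simp [commonRels])
  simpa using h

lemma commute_g₄_g₁ : Commute (g₄ : K4 n) g₁ := .of_inv_mul_mul_eq_self <| by
  have h := ofWord_eq_ofWord (n := n) (x := cnj a4 a1) (y := a4) (by simp [commonRels])
  simpa using h

lemma commute_g₄_g₂ : Commute (g₄ : K4 n) g₂ := .of_inv_mul_mul_eq_self <| by
  have h := ofWord_eq_ofWord (n := n) (x := cnj a4 a2) (y := a4) (by simp [commonRels])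
  simpa using h

lemma commute_g₅_g₁ : Commute (g₅ : K4 n) g₁ := .of_inv_mul_mul_eq_self <| by
  have h := ofWord_eq_ofWord (n := n) (x := cnj a5 a1) (y := a5) (by simp [commonRels])
  simpa using h

lemma commute_g₅_g₂ : Commute (g₅ : K4 n) g₂ := .of_inv_mul_mul_eq_self <| by
  have h := ofWord_eq_ofWord (n := n) (x := cnj a5 a2) (y := a5) (by simp [commonRels])
  simpa using h

lemma g₄_inv_mul_g₅_mul_g₄ : (g₄ : K4 n)⁻¹ * g₅ * g₄ = g₅ * t ^ 2 ^ n := by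
  have h := ofWord_eq_ofWord (n := n) (x := cnj a5 a4) (y := a5 * tt ^ 2 ^ n) (by simp)
  simpa using h

lemma g₃_eq : (g₃ : K4 n) = (g₂ ^ 2)⁻¹ := by
  rw [g₂_sq, eq_inv_of_mul_eq_one_right g₃_sq_mul_t]
  group

lemma t_eq : (t : K4 n) = g₂ ^ 4 := by
  rw [eq_inv_of_mul_eq_one_right g₃_sq_mul_t, g₃_eq, inv_pow, inv_inv, ← pow_mul]

lemma g₂_pow_two_pow : (g₂ : K4 n) ^ 2 ^ (n + 3) = 1 := by
  rw [show 2 ^ (n + 3) = 4 * 2 ^ (n + 1) by ring, pow_mul, ← t_eq, t_pow]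

lemma g₂_pow_val_add (x y : ZMod (2 ^ (n + 3))) :
    (g₂ : K4 n) ^ (x + y).val = g₂ ^ x.val * g₂ ^ y.val :=
  pow_zmod_val_add g₂_pow_two_pow x y

lemma g₂_pow_val_mul_g₁ (x : ZMod (2 ^ (n + 3))) :
    (g₂ : K4 n) ^ x.val * g₁ = g₁ * g₂ ^ (-x).val := by
  have h₁ : (g₁ : K4 n)⁻¹ * g₂ * g₁ = g₂⁻¹ := by
    rw [g₁_inv_mul_g₂_mul_g₁, g₃_eq]; group
  have h : SemiconjBy (g₁ : K4 n) g₂⁻¹ g₂ := by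
    rw [SemiconjBy, ← h₁]; group
  rw [pow_zmod_val_neg g₂_pow_two_pow, ← inv_pow, (h.pow_right x.val).eq]

lemma g₅_mul_g₄ :
    (g₅ : K4 n) * g₄ = g₄ * (g₂ ^ (2 ^ (n + 2) : ZMod (2 ^ (n + 3))).val * g₅) := by
  have hz : (g₂ : K4 n) ^ (2 ^ (n + 2) : ZMod (2 ^ (n + 3))).val = t ^ 2 ^ n := by
    rw [show (2 ^ (n + 2) : ZMod (2 ^ (n + 3))) = ((2 ^ (n + 2) : ℕ) : ZMod _) by push_cast; rfl,
      pow_zmod_val_natCast g₂_pow_two_pow, t_eq, ← pow_mul]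
    ring_nf
  have hc : Commute (g₅ : K4 n) (t ^ 2 ^ n) := by
    rw [t_eq]; exact (commute_g₅_g₂.pow_right 4).pow_right _
  rw [hz, ← hc.eq, ← g₄_inv_mul_g₅_mul_g₄]
  group

def toModel : K4 n →* Model n := PresentedGroup.toGroup Model.gen_rels

@[simp] lemma toModel_of (i : KGen) : toModel (PresentedGroup.of i : K4 n) = Model.gen i :=
  PresentedGroup.toGroup.of _

def ofModel (x : Model n) : K4 n :=
  g₁ ^ x.a.toNat * g₂ ^ x.b.val * g₄ ^ x.c.toNat * g₅ ^ x.d.toNat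

lemma ofModel_one : ofModel (1 : Model n) = 1 := by
  simp [ofModel, Model.one_def]

lemma ofModel_mul_g₁ (x : Model n) : ofModel (x * Model.gen .g1) = ofModel x * g₁ := by
  obtain ⟨a, b, c, d⟩ := x
  calc ofModel _ = g₁ ^ (!a).toNat * g₂ ^ (-b).val * g₄ ^ c.toNat * g₅ ^ d.toNat := by
        simp [ofModel, Model.gen]
    _ = g₁ ^ a.toNat * (g₂ ^ b.val * g₁) * g₄ ^ c.toNat * g₅ ^ d.toNat := by
        rw [g₂_pow_val_mul_g₁, ← mul_assoc, pow_toNat_mul_self g₁_sq]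
    _ = ofModel ⟨a, b, c, d⟩ * g₁ := by
        simp only [ofModel, mul_assoc, (commute_g₅_g₁.pow_left _).eq,
          (commute_g₄_g₁.pow_left _).left_comm]

lemma ofModel_mul_rot (x : Model n) (y : ZMod (2 ^ (n + 3))) :
    ofModel (x * Model.rot y) = ofModel x * g₂ ^ y.val := by
  obtain ⟨a, b, c, d⟩ := x
  simp only [ofModel, Model.rot, Model.mk_mul_mk, Bool.xor_false, Bool.sgn_false, Bool.and_false,
    zTerm_false, add_zero, g₂_pow_val_add, mul_assoc, (commute_g₅_g₂.pow_pow _ _).eq,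
    (commute_g₄_g₂.pow_pow _ _).left_comm]

lemma ofModel_mul_g₄ (x : Model n) : ofModel (x * Model.gen .g4) = ofModel x * g₄ := by
  obtain ⟨a, b, c, d⟩ := x
  have hd : (g₅ : K4 n) ^ d.toNat * g₄ = g₄ * (g₂ ^ (zTerm (n := n) d).val * g₅ ^ d.toNat) := by
    cases d <;> simp [zTerm, g₅_mul_g₄]
  simp only [ofModel, Model.gen, Model.mk_mul_mk, Bool.xor_false, Bool.sgn_false, Bool.and_true,
    Bool.xor_true, add_zero, g₂_pow_val_add, mul_assoc, hd]
  rw [← mul_assoc (g₄ ^ c.toNat), pow_toNat_mul_self g₄_sq, (commute_g₄_g₂.pow_pow _ _).left_comm]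

lemma ofModel_mul_g₅ (x : Model n) : ofModel (x * Model.gen .g5) = ofModel x * g₅ := by
  obtain ⟨a, b, c, d⟩ := x
  simp [ofModel, Model.gen, mul_assoc, pow_toNat_mul_self g₅_sq]

lemma ofModel_mul_toModel (g : K4 n) (x : Model n) : ofModel (x * toModel g) = ofModel x * g := by
  have hg : g ∈ Subgroup.closure (Set.range PresentedGroup.of) := by simp
  induction hg using Subgroup.closure_induction generalizing x with
  | mem g hg =>
    obtain ⟨i, rfl⟩ := hg
    rw [toModel_of]
    have h2 : (g₂ : K4 n) ^ (2 : ZMod (2 ^ (n + 3))).val = g₂ ^ 2 := by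
      simpa using pow_zmod_val_natCast (g₂_pow_two_pow (n := n)) 2
    have h4 : (g₂ : K4 n) ^ (4 : ZMod (2 ^ (n + 3))).val = g₂ ^ 4 := by
      simpa using pow_zmod_val_natCast (g₂_pow_two_pow (n := n)) 4
    cases i
    · exact ofModel_mul_g₁ x
    · show ofModel (x * Model.rot 1) = ofModel x * g₂
      simpa [ZMod.val_one] using ofModel_mul_rot x 1
    · show ofModel (x * Model.rot (-2)) = ofModel x * g₃
      simpa [g₃_eq, pow_zmod_val_neg g₂_pow_two_pow, h2] using ofModel_mul_rot x (-2)
    · exact ofModel_mul_g₄ x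
    · exact ofModel_mul_g₅ x
    · show ofModel (x * Model.rot 4) = ofModel x * t
      simpa [t_eq, h4] using ofModel_mul_rot x 4
  | one => simp
  | mul g h _ _ ihg ihh => rw [map_mul, ← mul_assoc, ihh, ihg, mul_assoc]
  | inv g _ ih => rw [eq_mul_inv_iff_mul_eq, ← ih, map_inv, inv_mul_cancel_right]

lemma ofModel_toModel (g : K4 n) : ofModel (toModel g) = g := by
  simpa [ofModel_one] using ofModel_mul_toModel g 1

lemma toModel_ofModel (x : Model n) : toModel (ofModel x) = x := by
  obtain ⟨a, b, c, d⟩ := x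
  cases a <;> cases c <;> cases d <;>
    simp [ofModel, g₁, g₂, g₄, g₅, Model.gen, Model.rot_pow] <;> simp [Model.rot]

def equivModel : K4 n ≃* Model n where
  toFun := toModel
  invFun := ofModel
  left_inv := ofModel_toModel
  right_inv := toModel_ofModel
  map_mul' := map_mul toModel

lemma lowerCentralSeries_eq_bot_iff (k : ℕ) :
    (⊤ : Subgroup (K4 n)).lowerCentralSeries k = ⊥ ↔
      (⊤ : Subgroup (Model n)).lowerCentralSeries k = ⊥ := by
  rw [← Subgroup.map_eq_bot_iff_of_injective _ equivModel.injective,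
    Subgroup.map_lowerCentralSeries, ← MonoidHom.range_eq_map,
    MonoidHom.range_eq_top.mpr equivModel.surjective]

namespace Model

lemma commutatorElement_rot (x : ZMod (2 ^ (n + 3))) (g : Model n) :
    ⁅rot x, g⁆ = rot (x - g.a.sgn x) := by
  obtain ⟨a, b, c, d⟩ := g
  cases a <;> simp [commutatorElement_def, rot]
  linear_combination zTerm_add_self (n := n) (d && c)

def rotSubgroup (k : ℕ) : Subgroup (Model n) where
  carrier := Set.range fun u => rot (2 ^ k * u)
  one_mem' := ⟨0, by simp⟩
  mul_mem' := by
    rintro _ _ ⟨u, rfl⟩ ⟨v, rfl⟩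
    exact ⟨u + v, by simp only [rot_mul_rot, mul_add]⟩
  inv_mem' := by
    rintro _ ⟨u, rfl⟩
    exact ⟨-u, by simp only [rot_inv, mul_neg]⟩

lemma sq_mem_rotSubgroup_one (x : Model n) : x ^ 2 ∈ rotSubgroup 1 := by
  obtain ⟨a, b, c, d⟩ := x
  have hz (e : Bool) : zTerm (n := n) e = 2 * bif e then 2 ^ (n + 1) else 0 := by
    cases e <;> simp [zTerm, ← pow_succ']
  refine ⟨(bif a then 0 else b) + bif d && c then 2 ^ (n + 1) else 0, ?_⟩
  cases a <;> simp [sq, rot, hz]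
  ring

lemma commutator_rotSubgroup_le (k : ℕ) :
    ⁅(rotSubgroup (k + 1) : Subgroup (Model n)), (⊤ : Subgroup (Model n))⁆ ≤
      rotSubgroup (k + 2) := by
  refine Subgroup.commutator_le.mpr ?_
  rintro _ ⟨u, rfl⟩ g _
  rw [commutatorElement_rot]
  cases g.a
  · exact ⟨0, by simp⟩
  · exact ⟨u, by rw [Bool.sgn_true, sub_neg_eq_add, ← two_mul, ← mul_assoc, ← pow_succ']⟩

lemma rot_two_pow_mem_lowerCentralSeries (k : ℕ) :
    rot (2 ^ k) ∈ (⊤ : Subgroup (Model n)).lowerCentralSeries k := by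
  induction k with
  | zero => exact Subgroup.mem_top _
  | succ k ih =>
    have h : ⁅(rot (2 ^ k) : Model n), (gen .g1 : Model n)⁆ = rot (2 ^ (k + 1)) := by
      rw [commutatorElement_rot, gen, Bool.sgn_true, sub_neg_eq_add, ← two_mul, ← pow_succ']
    rw [← h]
    exact Subgroup.commutator_mem_commutator ih (Subgroup.mem_top _)

lemma lowerCentralSeries_eq (k : ℕ) :
    (⊤ : Subgroup (Model n)).lowerCentralSeries (k + 1) = rotSubgroup (k + 1) := by
  refine le_antisymm ?_ ?_
  · induction k with
    | zero => exact commutator_le_of_forall_sq_mem sq_mem_rotSubgroup_one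
    | succ k ih =>
      exact (Subgroup.commutator_mono ih le_rfl).trans (commutator_rotSubgroup_le k)
  · rintro _ ⟨u, rfl⟩
    show rot (2 ^ (k + 1) * u) ∈ _
    rw [← ZMod.natCast_zmod_val u, mul_comm, ← rot_pow]
    exact pow_mem (rot_two_pow_mem_lowerCentralSeries (k + 1)) _

lemma lowerCentralSeries_eq_bot : (⊤ : Subgroup (Model n)).lowerCentralSeries (n + 3) = ⊥ := by
  rw [lowerCentralSeries_eq (n + 2), eq_bot_iff]
  rintro _ ⟨u, rfl⟩
  simp [two_pow_add_three_eq_zero]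

lemma lowerCentralSeries_ne_bot : (⊤ : Subgroup (Model n)).lowerCentralSeries (n + 2) ≠ ⊥ := by
  rw [lowerCentralSeries_eq (n + 1), Ne, Subgroup.eq_bot_iff_forall]
  intro h
  have h1 : rot (2 ^ (n + 2) * 1) = 1 := h _ ⟨1, rfl⟩
  exact two_pow_add_two_ne_zero (by simpa [rot, one_def] using h1)

end Model

def wTerm (e : Bool) : ZMod (2 ^ (n + 3)) := bif e then 2 ^ (n + 1) else 0

lemma wTerm_add_self (e : Bool) : wTerm (n := n) e + wTerm e = zTerm e := by
  cases e <;> simp [wTerm, zTerm, ← two_mul, ← pow_succ']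

lemma wTerm_xor (e e' : Bool) :
    wTerm (n := n) (e ^^ e') = wTerm e + wTerm e' + zTerm (e && e') := by
  cases e <;> cases e' <;> simp [wTerm, zTerm]
  linear_combination -two_pow_add_three_eq_zero (n := n)

lemma neg_wTerm (e : Bool) : -wTerm (n := n) e = wTerm e + zTerm e := by
  rw [← wTerm_add_self]
  cases e <;> simp [wTerm]
  linear_combination -two_pow_add_three_eq_zero (n := n)

lemma sgn_wTerm (a e : Bool) : a.sgn (wTerm (n := n) e) = wTerm e + zTerm (a && e) := by
  cases a <;> simp [neg_wTerm]

namespace Model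

def θFun (x : Model n) : Model n :=
  ⟨x.a, x.b + wTerm x.d - wTerm x.a + zTerm (x.d && (x.a ^^ x.c)), x.d, x.a ^^ x.c ^^ x.d⟩

lemma θFun_mul (x y : Model n) : θFun (x * y) = θFun x * θFun y := by
  obtain ⟨a, b, c, d⟩ := x
  obtain ⟨a', b', c', d'⟩ := y
  simp only [θFun, mk_mul_mk]
  ext
  · rfl
  · have hz : zTerm (n := n) (d && c') + zTerm (d && d') + zTerm (a && a') +
        zTerm ((d ^^ d') && (a ^^ a' ^^ (c ^^ c'))) + zTerm (a' && a) =
        zTerm (a' && d) + zTerm (d && (a ^^ c)) + zTerm (d' && (a' ^^ c')) +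
          zTerm ((a ^^ c ^^ d) && d') := by
      simp only [zTerm_add]; congr 1; revert a a' c c' d d'; decide
    simp only [sub_eq_add_neg, Bool.sgn_add, sgn_wTerm, sgn_zTerm, wTerm_xor, neg_wTerm, neg_add,
      neg_zTerm]
    linear_combination hz - zTerm_add_self (n := n) (a' && a)
  · rfl
  · dsimp only; revert a c d a' c' d'; decide

lemma θFun_θFun_θFun (x : Model n) : θFun (θFun (θFun x)) = x := by
  obtain ⟨a, b, c, d⟩ := x
  have h := two_pow_add_three_eq_zero (n := n)
  cases a <;> cases c <;> cases d <;> simp [θFun, wTerm, zTerm] <;> grind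

def θ : MulAut (Model n) where
  toFun := θFun
  invFun := θFun ∘ θFun
  left_inv := θFun_θFun_θFun
  right_inv := θFun_θFun_θFun
  map_mul' := θFun_mul

lemma θ_pow_three : (θ : MulAut (Model n)) ^ 3 = 1 :=
  MulEquiv.ext θFun_θFun_θFun

lemma θ_ne_one : (θ : MulAut (Model n)) ≠ 1 := fun h => by
  simpa [θ, θFun, gen] using DFunLike.congr_fun h (gen .g4)

lemma not_isPGroup_two_mulAut : ¬IsPGroup 2 (MulAut (Model n)) := fun h =>
  θ_ne_one (h.eq_one_of_pow_eq_one (by norm_num) θ_pow_three)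

end Model

end K4

open K4 in
theorem K4_card_class_autNotPGroup_general (n : ℕ) :
    Nat.card (K4 n) = 2 ^ (n + 6) ∧
      (⊤ : Subgroup (K4 n)).lowerCentralSeries (n + 3) = ⊥ ∧
      (⊤ : Subgroup (K4 n)).lowerCentralSeries (n + 2) ≠ ⊥ ∧
      ¬ IsPGroup 2 (MulAut (K4 n)) :=
  ⟨(Nat.card_congr equivModel.toEquiv).trans Model.card,
    (lowerCentralSeries_eq_bot_iff _).mpr Model.lowerCentralSeries_eq_bot,
    (lowerCentralSeries_eq_bot_iff _).not.mpr Model.lowerCentralSeries_ne_bot,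
    fun h => Model.not_isPGroup_two_mulAut (h.of_equiv (MulAut.congr equivModel))⟩

/-- For every `n ≥ 2`, the group `Kₙ^4` has order `2^(n+6)`, nilpotency class `n + 3`
(hence coclass `3`), and its automorphism group is not a `2`-group. -/
theorem K4_card_class_autNotPGroup (n : ℕ) (hn : 2 ≤ n) :
    Nat.card (K4 n) = 2 ^ (n + 6) ∧
      (⊤ : Subgroup (K4 n)).lowerCentralSeries (n + 3) = ⊥ ∧
      (⊤ : Subgroup (K4 n)).lowerCentralSeries (n + 2) ≠ ⊥ ∧
      ¬ IsPGroup 2 (MulAut (K4 n)) :=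
  K4_card_class_autNotPGroup_general n
end
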